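/- In the (E,D̄)-setup: for every A ⊆ κ, A =_{D(κ)} 0 if and only if cl(A) =_{D(κ)} 0. -/

import Mathlib

noncomputable section

open Cardinal Set

universe u

/-- The generator `[α, κ) \ ⋃_{i<α} A_i` of the filter `D(κ)`. -/
def genD (κ : Cardinal.{u}) (A : κ.ord.ToType → Set κ.ord.ToType)
    (α : κ.ord.ToType) : Set κ.ord.ToType :=
  {ξ | α ≤ ξ} \ ⋃ i ∈ Iio α, A i

/-- The filter `D(κ)` on `κ` generated by the sets `[α, κ) \ ⋃_{i<α} A_i`
(these generators are decreasing, so the filter is their upward closure). -/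
def DK (κ : Cardinal.{u}) (A : κ.ord.ToType → Set κ.ord.ToType) :
    Set (Set κ.ord.ToType) :=
  {X | ∃ α, genD κ A α ⊆ X}

/-- `D^+(κ)`: the sets whose complement is not in `D(κ)`. -/
def DKplus (κ : Cardinal.{u}) (A : κ.ord.ToType → Set κ.ord.ToType) :
    Set (Set κ.ord.ToType) :=
  {X | Xᶜ ∉ DK κ A}

/-- `X =_{D(κ)} 0`, i.e. `κ \ X ∈ D(κ)`. -/
def DKzero (κ : Cardinal.{u}) (A : κ.ord.ToType → Set κ.ord.ToType)
    (X : Set κ.ord.ToType) : Prop :=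
  Xᶜ ∈ DK κ A

/-- `X ⊂*_{D(κ)} Y` : `X \ Y =_{D(κ)} 0` and `Y \ X ∈ D^+(κ)`. -/
def DKssub (κ : Cardinal.{u}) (A : κ.ord.ToType → Set κ.ord.ToType)
    (X Y : Set κ.ord.ToType) : Prop :=
  DKzero κ A (X \ Y) ∧ (Y \ X) ∈ DKplus κ A

/-- The filter `D^δ` on `δ` generated by the sets `[α, δ) \ ⋃_{i<α} A_i` for `α < δ`;
its members are regarded as subsets of `Iio δ`. -/
def Ddelta (κ : Cardinal.{u}) (A : κ.ord.ToType → Set κ.ord.ToType)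
    (δ : κ.ord.ToType) : Set (Set κ.ord.ToType) :=
  {X | X ⊆ Iio δ ∧ ∃ α, α < δ ∧ genD κ A α ∩ Iio δ ⊆ X}

/-- `D` is a proper filter on the ambient set `S`. -/
def IsProperFilterOn (κ : Cardinal.{u}) (S : Set κ.ord.ToType)
    (D : Set (Set κ.ord.ToType)) : Prop :=
  S ∈ D ∧ ∅ ∉ D ∧ (∀ X ∈ D, X ⊆ S) ∧
  (∀ X ∈ D, ∀ Y, X ⊆ Y → Y ⊆ S → Y ∈ D) ∧
  (∀ X ∈ D, ∀ Y ∈ D, X ∩ Y ∈ D)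

/-- The filter on the ambient set `S` generated by a filter `base` together with a
further family `G` of sets. -/
def GenOver (κ : Cardinal.{u}) (S : Set κ.ord.ToType)
    (base G : Set (Set κ.ord.ToType)) : Set (Set κ.ord.ToType) :=
  {X | X ⊆ S ∧ ∃ Y ∈ base, ∃ s ⊆ G, s.Finite ∧ Y ∩ ⋂₀ s ⊆ X}

/-- `C` is closed unbounded in `κ`. -/
def IsClubIn (κ : Cardinal.{u}) (C : Set κ.ord.ToType) : Prop :=
  (∀ α, ∃ ξ ∈ C, α < ξ) ∧
  (∀ ξ, (∃ η, η < ξ) → (∀ η, η < ξ → ∃ c ∈ C, η < c ∧ c < ξ) → ξ ∈ C)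

/-- `δ` is a limit element of `κ`: nonminimal, with no largest element below it. -/
def IsLimitElt (κ : Cardinal.{u}) (δ : κ.ord.ToType) : Prop :=
  (∃ η, η < δ) ∧ ∀ η, η < δ → ∃ η', η < η' ∧ η' < δ

/-- The `(E, D̄)`-setup: `κ` is regular uncountable with `κ^{<κ} = κ`;
`A i` (`i < κ`) are pairwise disjoint subsets of `κ ∖ (i+1)` of size `κ` covering
`κ ∖ {0}`; `E` is a set of limit ordinals `δ < κ`, containing a club, such that each
`A α ∩ δ` (`α < δ`) is unbounded in `δ`; `delta ζ` is the unique `δ ∈ E` with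
`ζ ∈ A δ`; and `D ζ` (for `ζ ∈ A* = ⋃_{δ∈E} A δ`) is a proper filter on `δ_ζ`
extending `D^{δ_ζ}`, generated over it by fewer than `κ` sets, such that every such
filter occurs as `D ζ` for `κ` many `ζ ∈ A δ`. -/
structure EDSetup (κ : Cardinal.{u}) where
  A : κ.ord.ToType → Set κ.ord.ToType
  E : Set κ.ord.ToType
  D : κ.ord.ToType → Set (Set κ.ord.ToType)
  delta : κ.ord.ToType → κ.ord.ToType
  hreg : κ.IsRegular
  hunc : ℵ₀ < κ
  hpow : κ ^< κ = κ
  hdisj : ∀ i j, i ≠ j → Disjoint (A i) (A j)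
  hgt : ∀ i, ∀ ξ ∈ A i, i < ξ
  hAcard : ∀ i, #(A i) = κ
  hcover : (⋃ i, A i) = {ξ | ∃ η, η < ξ}
  hElim : ∀ δ ∈ E, IsLimitElt κ δ
  hEunb : ∀ δ ∈ E, ∀ α, α < δ → ∀ β, β < δ → ∃ ξ ∈ A α, β < ξ ∧ ξ < δ
  hEclub : ∃ C ⊆ E, IsClubIn κ C
  hdelta : ∀ δ ∈ E, ∀ ζ ∈ A δ, delta ζ = δ
  hDfilter : ∀ δ ∈ E, ∀ ζ ∈ A δ, IsProperFilterOn κ (Iio δ) (D ζ)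
  hDgen : ∀ δ ∈ E, ∀ ζ ∈ A δ,
    ∃ G : Set (Set κ.ord.ToType), #G < κ ∧ D ζ = GenOver κ (Iio δ) (Ddelta κ A δ) G
  hDall : ∀ δ ∈ E, ∀ Df : Set (Set κ.ord.ToType),
    IsProperFilterOn κ (Iio δ) Df →
    (∃ G : Set (Set κ.ord.ToType), #G < κ ∧
        Df = GenOver κ (Iio δ) (Ddelta κ A δ) G) →
    #({ζ ∈ A δ | D ζ = Df} : Set κ.ord.ToType) = κ

/-- `A* = ⋃_{δ ∈ E} A_δ`. -/
def Astar (κ : Cardinal.{u}) (S : EDSetup κ) : Set κ.ord.ToType :=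
  ⋃ δ ∈ S.E, S.A δ

/-- `X` is `(E, D̄)`-closed: whenever `ζ ∈ A*` and `X ∩ δ_ζ ∈ D_ζ`, also `ζ ∈ X`. -/
def EDClosed (κ : Cardinal.{u}) (S : EDSetup κ) (X : Set κ.ord.ToType) : Prop :=
  ∀ ζ ∈ Astar κ S, X ∩ Iio (S.delta ζ) ∈ S.D ζ → ζ ∈ X

/-- `cl(X)`: the smallest `(E, D̄)`-closed subset of `κ` containing `X`. -/
def EDcl (κ : Cardinal.{u}) (S : EDSetup κ) (X : Set κ.ord.ToType) :
    Set κ.ord.ToType :=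
  ⋂₀ {Y | EDClosed κ S Y ∧ X ⊆ Y}

/-!
If `genD α` misses `X`, then `Z = (genD α)ᶜ ∪ A α` is `(E, D̄)`-closed and contains `X`, hence
contains `cl X`. Closedness: for `ζ ∈ A δ` with `δ ∈ E`, either `δ < α` and `ζ` lies in
`⋃_{i<α} A i ⊆ (genD α)ᶜ`, or `δ = α` and `ζ ∈ A α`, or `δ > α`, in which case `Z ∩ δ` misses
`genD α' ∩ δ ∈ D^δ ⊆ D_ζ` for some `α < α' < δ` and so is not in the proper filter `D_ζ`.
For any `β > α`, `genD β` misses `Z`, so `cl X =_{D(κ)} 0`.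
-/

variable {κ : Cardinal.{u}}

theorem genD_antitone (A : κ.ord.ToType → Set κ.ord.ToType) : Antitone (genD κ A) := by
  intro a b hab ξ hξ
  refine ⟨hab.trans hξ.1, fun hm => hξ.2 ?_⟩
  simp only [mem_iUnion, mem_Iio] at hm ⊢
  obtain ⟨i, hi, hξi⟩ := hm
  exact ⟨i, hi.trans_le hab, hξi⟩

theorem disjoint_genD_of_lt (A : κ.ord.ToType → Set κ.ord.ToType) {i α : κ.ord.ToType}
    (h : i < α) : Disjoint (genD κ A α) (A i) :=
  disjoint_left.2 fun _ hξ hξi => hξ.2 (mem_biUnion h hξi)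

theorem disjoint_genD_compl_genD_union (A : κ.ord.ToType → Set κ.ord.ToType)
    {α β : κ.ord.ToType} (h : α < β) : Disjoint (genD κ A β) ((genD κ A α)ᶜ ∪ A α) :=
  disjoint_union_right.2
    ⟨disjoint_compl_right.mono_left (genD_antitone A h.le), disjoint_genD_of_lt A h⟩

theorem dkzero_iff_exists_disjoint (A : κ.ord.ToType → Set κ.ord.ToType)
    (X : Set κ.ord.ToType) : DKzero κ A X ↔ ∃ α, Disjoint (genD κ A α) X := by
  simp only [DKzero, DK, mem_ofPred_eq, subset_compl_iff_disjoint_right]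

theorem subset_EDcl (S : EDSetup κ) (X : Set κ.ord.ToType) : X ⊆ EDcl κ S X :=
  subset_sInter fun _ hY => hY.2

theorem EDcl_subset_of_closed {S : EDSetup κ} {X Y : Set κ.ord.ToType}
    (hY : EDClosed κ S Y) (hXY : X ⊆ Y) : EDcl κ S X ⊆ Y :=
  sInter_subset_of_mem ⟨hY, hXY⟩

namespace EDSetup

theorem exists_gt (S : EDSetup κ) (α : κ.ord.ToType) : ∃ β, α < β := by
  have hne : (S.A α).Nonempty := by
    rw [← nonempty_coe_sort, ← mk_ne_zero_iff, S.hAcard]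
    exact (aleph0_pos.trans S.hunc).ne'
  obtain ⟨β, hβ⟩ := hne
  exact ⟨β, S.hgt α β hβ⟩

variable (S : EDSetup κ)

theorem Ddelta_subset_D {δ ζ : κ.ord.ToType} (hδ : δ ∈ S.E) (hζ : ζ ∈ S.A δ) :
    Ddelta κ S.A δ ⊆ S.D ζ := by
  intro Y hY
  obtain ⟨G, -, hD⟩ := S.hDgen δ hδ ζ hζ
  rw [hD]
  exact ⟨hY.1, Y, hY, ∅, empty_subset _, finite_empty, by simp⟩

theorem inter_Iio_notMem_D_of_disjoint {δ ζ α : κ.ord.ToType} (hδ : δ ∈ S.E)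
    (hζ : ζ ∈ S.A δ) (hα : α < δ) {Y : Set κ.ord.ToType} (hY : Disjoint (genD κ S.A α) Y) :
    Y ∩ Iio δ ∉ S.D ζ := by
  intro hYD
  have hD := S.hDfilter δ hδ ζ hζ
  have hgen : genD κ S.A α ∩ Iio δ ∈ S.D ζ :=
    S.Ddelta_subset_D hδ hζ ⟨inter_subset_right, α, hα, subset_rfl⟩
  have hempty : genD κ S.A α ∩ Iio δ ∩ (Y ∩ Iio δ) = ∅ :=
    disjoint_iff_inter_eq_empty.1 (hY.mono inter_subset_left inter_subset_left)
  exact hD.2.1 (hempty ▸ hD.2.2.2.2 _ hgen _ hYD)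

theorem edClosed_compl_genD_union (α : κ.ord.ToType) :
    EDClosed κ S ((genD κ S.A α)ᶜ ∪ S.A α) := by
  intro ζ hζ hmem
  obtain ⟨δ, hδ, hζδ⟩ : ∃ δ ∈ S.E, ζ ∈ S.A δ := by simpa [Astar] using hζ
  rw [S.hdelta δ hδ ζ hζδ] at hmem
  rcases lt_trichotomy δ α with h | rfl | h
  · exact Or.inl fun hg => disjoint_left.1 (disjoint_genD_of_lt S.A h) hg hζδ
  · exact Or.inr hζδ
  · obtain ⟨α', hαα', hα'δ⟩ := (S.hElim δ hδ).2 α h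
    exact absurd hmem <| S.inter_Iio_notMem_D_of_disjoint hδ hζδ hα'δ
      (disjoint_genD_compl_genD_union S.A hαα')

end EDSetup

/-- Observation 3(d): `X =_{D(κ)} 0` iff `cl(X) =_{D(κ)} 0`. -/
theorem cl_eqZero_iff (κ : Cardinal.{u}) (S : EDSetup κ) (X : Set κ.ord.ToType) :
    DKzero κ S.A X ↔ DKzero κ S.A (EDcl κ S X) := by
  simp only [dkzero_iff_exists_disjoint]
  constructor
  · rintro ⟨α, hα⟩
    obtain ⟨β, hαβ⟩ := S.exists_gt α
    have hcl : EDcl κ S X ⊆ (genD κ S.A α)ᶜ ∪ S.A α :=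
      EDcl_subset_of_closed (S.edClosed_compl_genD_union α)
        (hα.subset_compl_left.trans subset_union_left)
    exact ⟨β, (disjoint_genD_compl_genD_union S.A hαβ).mono_right hcl⟩
  · rintro ⟨α, hα⟩
    exact ⟨α, hα.mono_right (subset_EDcl S X)⟩
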